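/- Let b > 0 and let α : [0,b] → ℝ be differentiable with 0 < α(t) < 1 on [0,b] and |α'(t)| ≤ L. With κ = Γ(α(0))·Γ(1−α(0)), the function g(t) = (1/κ) ∫₀ᵗ (t−s)^{α(0)−1} s^{−α(s)} ds satisfies lim_{t→0⁺} g(t) = 1. -/

import Mathlib

/-!
With `a = α 0`, the substitution `s = t z` turns the integral into
`∫₀¹ z^(-a) (1-z)^(a-1) (t z)^(a - α (t z)) dz`, i.e. the Beta integral `Γ(a) Γ(1-a)`
perturbed by the factor `(t z)^(a - α (t z))`. The derivative bound gives `|a - α s| ≤ L s`, and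
`s |log s| ≤ t (|log t| + 1)` for `s = t z ≤ t`, so that factor is within
`exp (L t (|log t| + 1)) - 1` of `1` uniformly in `z`; this bound on `|g t - 1|` tends to `0`.
-/

open MeasureTheory Set Filter
open scoped Topology

theorem ofReal_rpow_mul_one_sub_rpow {p q x : ℝ} (hx : x ∈ Icc (0:ℝ) 1) :
    ((x ^ (p - 1) * (1 - x) ^ (q - 1) : ℝ) : ℂ) =
      (x : ℂ) ^ ((p : ℂ) - 1) * (1 - (x : ℂ)) ^ ((q : ℂ) - 1) := by
  rw [Complex.ofReal_mul, Complex.ofReal_cpow hx.1, Complex.ofReal_cpow (sub_nonneg.2 hx.2)]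
  push_cast
  rfl

theorem intervalIntegrable_rpow_mul_one_sub_rpow {p q : ℝ} (hp : 0 < p) (hq : 0 < q) :
    IntervalIntegrable (fun x : ℝ => x ^ (p - 1) * (1 - x) ^ (q - 1)) volume 0 1 := by
  have h := Complex.betaIntegral_convergent (u := p) (v := q) (by simpa) (by simpa)
  rw [intervalIntegrable_iff_integrableOn_Ioc_of_le zero_le_one] at h ⊢
  refine IntegrableOn.congr_fun h.re (fun x hx => ?_) measurableSet_Ioc
  simp [← ofReal_rpow_mul_one_sub_rpow (Ioc_subset_Icc_self hx)]

theorem integral_rpow_mul_one_sub_rpow {p q : ℝ} (hp : 0 < p) (hq : 0 < q) :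
    ∫ x in (0:ℝ)..1, x ^ (p - 1) * (1 - x) ^ (q - 1) =
      Real.Gamma p * Real.Gamma q / Real.Gamma (p + q) := by
  have h := Complex.betaIntegral_eq_Gamma_mul_div (u := p) (v := q) (by simpa) (by simpa)
  rw [Complex.betaIntegral, ← intervalIntegral.integral_congr fun x hx =>
    ofReal_rpow_mul_one_sub_rpow (p := p) (q := q) (uIcc_of_le (zero_le_one' ℝ) ▸ hx),
    intervalIntegral.integral_ofReal, ← Complex.ofReal_add, Complex.Gamma_ofReal,
    Complex.Gamma_ofReal, Complex.Gamma_ofReal] at h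
  exact_mod_cast h

theorem abs_integral_mul_sub_integral_le {X : Type*} [MeasurableSpace X] {μ : Measure X}
    {φ E : X → ℝ} {ε : ℝ} (hφ : Integrable φ μ) (hφ0 : 0 ≤ᵐ[μ] φ)
    (hE : AEStronglyMeasurable E μ) (hEε : ∀ᵐ x ∂μ, |E x - 1| ≤ ε) :
    |∫ x, φ x * E x ∂μ - ∫ x, φ x ∂μ| ≤ ε * ∫ x, φ x ∂μ := by
  have hφE : Integrable (fun x => E x * φ x) μ := by
    refine hφ.bdd_mul hE (c := |ε| + 1) ?_
    filter_upwards [hEε] with x hx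
    have hEx := abs_sub_abs_le_abs_sub (E x) 1
    rw [Real.norm_eq_abs]
    linarith [le_abs_self ε, abs_one (α := ℝ)]
  rw [← integral_sub (by simpa only [mul_comm] using hφE) hφ, ← integral_const_mul,
    ← Real.norm_eq_abs]
  refine norm_integral_le_of_norm_le (hφ.const_mul ε) ?_
  filter_upwards [hEε, hφ0] with x hx hx0
  rw [Real.norm_eq_abs, ← mul_sub_one, abs_mul, abs_of_nonneg hx0, mul_comm]
  exact mul_le_mul_of_nonneg_right hx hx0

theorem abs_rpow_sub_one_le {x : ℝ} (hx : 0 < x) (y : ℝ) :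
    |x ^ y - 1| ≤ Real.exp |y * Real.log x| - 1 := by
  rw [Real.rpow_def_of_pos hx, mul_comm]
  set u := y * Real.log x
  rcases le_total 0 u with hu | hu
  · rw [abs_of_nonneg hu, abs_of_nonneg (by linarith [Real.add_one_le_exp u])]
  · rw [abs_of_nonpos hu, abs_of_nonpos (sub_nonpos.2 (Real.exp_le_one_iff.2 hu))]
    linarith [Real.add_one_le_exp u, Real.add_one_le_exp (-u)]

theorem mul_abs_log_mul_le {t z : ℝ} (ht : 0 < t) (hz0 : 0 < z) (hz1 : z ≤ 1) :
    t * z * |Real.log (t * z)| ≤ t * (|Real.log t| + 1) := by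
  have hlog : |Real.log (t * z)| ≤ |Real.log t| + -Real.log z := by
    rw [Real.log_mul ht.ne' hz0.ne', ← abs_of_nonpos (Real.log_nonpos hz0.le hz1)]
    exact abs_add_le _ _
  have hzlog : z * -Real.log z ≤ 1 := by
    have := Real.negMulLog_le_one_sub_self hz0.le
    rw [Real.negMulLog] at this
    linarith
  calc t * z * |Real.log (t * z)| ≤ t * (z * |Real.log t| + z * -Real.log z) := by
        rw [mul_assoc, ← mul_add]
        gcongr
    _ ≤ t * (|Real.log t| + 1) := by
        gcongr
        exact mul_le_of_le_one_left (abs_nonneg _) hz1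

theorem integral_rpow_sub_mul_rpow_eq_integral_comp_mul {t : ℝ} (ht : 0 < t) (a : ℝ)
    (β : ℝ → ℝ) :
    ∫ s in (0:ℝ)..t, (t - s) ^ (a - 1) * s ^ (-β s) =
      ∫ z in (0:ℝ)..1, z ^ (-a) * (1 - z) ^ (a - 1) * (t * z) ^ (a - β (t * z)) := by
  have h := intervalIntegral.smul_integral_comp_mul_left
    (fun s => (t - s) ^ (a - 1) * s ^ (-β s)) t (a := 0) (b := 1)
  rw [mul_zero, mul_one] at h
  rw [← h, smul_eq_mul, ← intervalIntegral.integral_const_mul]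
  refine intervalIntegral.integral_congr_ae (Eventually.of_forall fun z hz => ?_)
  rw [uIoc_of_le zero_le_one] at hz
  have htz : 0 < t * z := mul_pos ht hz.1
  have ht_cancel : t * t ^ (a - 1) * t ^ (-a) = 1 := by
    rw [mul_assoc, ← Real.rpow_add ht, show a - 1 + -a = -1 by ring, Real.rpow_neg_one,
      mul_inv_cancel₀ ht.ne']
  rw [show t - t * z = t * (1 - z) by ring, Real.mul_rpow ht.le (sub_nonneg.2 hz.2),
    show -β (t * z) = -a + (a - β (t * z)) by ring, Real.rpow_add htz,
    Real.mul_rpow ht.le hz.1.le]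
  linear_combination (z ^ (-a) * (1 - z) ^ (a - 1) * (t * z) ^ (a - β (t * z))) * ht_cancel

theorem abs_integral_beta_mul_div_sub_one_le {a ε : ℝ} (ha0 : 0 < a) (ha1 : a < 1)
    {E : ℝ → ℝ} (hE : ContinuousOn E (Ioo 0 1))
    (hEε : ∀ z ∈ Ioo (0:ℝ) 1, |E z - 1| ≤ ε) :
    |(∫ z in (0:ℝ)..1, z ^ (-a) * (1 - z) ^ (a - 1) * E z) /
      (Real.Gamma a * Real.Gamma (1 - a)) - 1| ≤ ε := by
  have hφ : IntervalIntegrable (fun z : ℝ => z ^ (-a) * (1 - z) ^ (a - 1)) volume 0 1 := by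
    simpa using intervalIntegrable_rpow_mul_one_sub_rpow (sub_pos.2 ha1) ha0
  have hβ : ∫ z in (0:ℝ)..1, z ^ (-a) * (1 - z) ^ (a - 1) =
      Real.Gamma a * Real.Gamma (1 - a) := by
    simpa [mul_comm (Real.Gamma (1 - a))] using integral_rpow_mul_one_sub_rpow (sub_pos.2 ha1) ha0
  have hκ : 0 < Real.Gamma a * Real.Gamma (1 - a) :=
    mul_pos (Real.Gamma_pos_of_pos ha0) (Real.Gamma_pos_of_pos (sub_pos.2 ha1))
  rw [intervalIntegrable_iff_integrableOn_Ioc_of_le zero_le_one,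
    integrableOn_Ioc_iff_integrableOn_Ioo] at hφ
  rw [intervalIntegral.integral_of_le zero_le_one, integral_Ioc_eq_integral_Ioo] at hβ ⊢
  have h := abs_integral_mul_sub_integral_le hφ
    (ae_restrict_of_forall_mem measurableSet_Ioo fun z hz =>
      mul_nonneg (Real.rpow_nonneg hz.1.le _) (Real.rpow_nonneg (sub_nonneg.2 hz.2.le) _))
    (hE.aestronglyMeasurable measurableSet_Ioo) (ae_restrict_of_forall_mem measurableSet_Ioo hEε)
  rw [hβ] at h
  rwa [div_sub_one hκ.ne', abs_div, abs_of_pos hκ, div_le_iff₀ hκ]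

theorem tendsto_mul_abs_log_add_one_nhdsGT_zero :
    Tendsto (fun t => t * (|Real.log t| + 1)) (𝓝[>] 0) (𝓝 0) := by
  have hc : Continuous fun t => |t * Real.log t| + t :=
    Real.continuous_mul_log.abs.add continuous_id
  have h := (hc.tendsto 0).mono_left (nhdsWithin_le_nhds (s := Ioi 0))
  simp only [zero_mul, abs_zero, add_zero] at h
  refine h.congr' ?_
  filter_upwards [self_mem_nhdsWithin] with t ht
  rw [abs_mul, abs_of_pos (show (0:ℝ) < t from ht)]
  ring

theorem abs_mul_rpow_sub_one_le {L t z y : ℝ} (ht : 0 < t) (hz0 : 0 < z) (hz1 : z ≤ 1)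
    (hy : |y| ≤ L * (t * z)) :
    |(t * z) ^ y - 1| ≤ Real.exp (L * (t * (|Real.log t| + 1))) - 1 := by
  have htz : 0 < t * z := mul_pos ht hz0
  have hL : 0 ≤ L := nonneg_of_mul_nonneg_left ((abs_nonneg y).trans hy) htz
  calc |(t * z) ^ y - 1| ≤ Real.exp |y * Real.log (t * z)| - 1 := abs_rpow_sub_one_le htz y
    _ ≤ Real.exp (L * (t * (|Real.log t| + 1))) - 1 := by
      gcongr
      calc |y * Real.log (t * z)| = |y| * |Real.log (t * z)| := abs_mul _ _
        _ ≤ L * (t * z * |Real.log (t * z)|) := by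
          rw [← mul_assoc]
          gcongr
        _ ≤ L * (t * (|Real.log t| + 1)) :=
          mul_le_mul_of_nonneg_left (mul_abs_log_mul_le ht hz0 hz1) hL

theorem abs_integral_rpow_sub_mul_rpow_div_sub_one_le {α : ℝ → ℝ} {a L t : ℝ} (ha0 : 0 < a)
    (ha1 : a < 1) (ht : 0 < t) (hα : ContinuousOn α (Ioo 0 t))
    (hdev : ∀ s ∈ Ioo 0 t, |a - α s| ≤ L * s) :
    |(∫ s in (0:ℝ)..t, (t - s) ^ (a - 1) * s ^ (-α s)) /
        (Real.Gamma a * Real.Gamma (1 - a)) - 1|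
      ≤ Real.exp (L * (t * (|Real.log t| + 1))) - 1 := by
  have hmem : ∀ z ∈ Ioo (0:ℝ) 1, t * z ∈ Ioo 0 t := fun z hz =>
    ⟨mul_pos ht hz.1, mul_lt_of_lt_one_right ht hz.2⟩
  rw [integral_rpow_sub_mul_rpow_eq_integral_comp_mul ht]
  refine abs_integral_beta_mul_div_sub_one_le ha0 ha1 ?_
    fun z hz => abs_mul_rpow_sub_one_le ht hz.1 hz.2.le (hdev _ (hmem z hz))
  exact ContinuousOn.rpow (by fun_prop)
    (continuousOn_const.sub (hα.comp (by fun_prop) hmem)) fun z hz => Or.inl (hmem z hz).1.ne'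

/-- with `κ = Γ(α 0) Γ(1 - α 0)`, the function
`g t = (1/κ) ∫₀ᵗ (t-s)^(α 0 - 1) s^(-α s) ds` satisfies `lim_{t→0⁺} g t = 1`. -/
theorem stmt1 (b L : ℝ) (hb : 0 < b) (α α' : ℝ → ℝ)
    (hα_diff : ∀ t ∈ Icc (0:ℝ) b, HasDerivAt α (α' t) t)
    (hα_range : ∀ t ∈ Icc (0:ℝ) b, 0 < α t ∧ α t < 1)
    (hα_lip : ∀ t ∈ Icc (0:ℝ) b, |α' t| ≤ L)
    (g : ℝ → ℝ)
    (hg : ∀ t : ℝ, g t = (1 / (Real.Gamma (α 0) * Real.Gamma (1 - α 0))) *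
      ∫ s in (0:ℝ)..t, (t - s) ^ (α 0 - 1) * s ^ (-(α s))) :
    Tendsto g (nhdsWithin 0 (Ioi 0)) (nhds 1) := by
  have h0b : (0:ℝ) ∈ Icc 0 b := ⟨le_rfl, hb.le⟩
  obtain ⟨ha0, ha1⟩ := hα_range 0 h0b
  have hdev : ∀ s ∈ Icc 0 b, |α 0 - α s| ≤ L * s := fun s hs => by
    simpa [Real.norm_eq_abs, abs_sub_comm, abs_of_nonneg hs.1] using
      (convex_Icc 0 b).norm_image_sub_le_of_norm_hasDerivWithin_le
        (fun y hy => (hα_diff y hy).hasDerivWithinAt) (fun y hy => by simpa using hα_lip y hy)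
        h0b hs
  have hbound : ∀ t ∈ Ioo 0 b,
      ‖g t - 1‖ ≤ Real.exp (L * (t * (|Real.log t| + 1))) - 1 := by
    rintro t ⟨ht0, htb⟩
    have hsub : Ioo 0 t ⊆ Icc 0 b := Ioo_subset_Icc_self.trans (Icc_subset_Icc_right htb.le)
    rw [Real.norm_eq_abs, hg, one_div_mul_eq_div]
    exact abs_integral_rpow_sub_mul_rpow_div_sub_one_le ha0 ha1 ht0
      (fun s hs => (hα_diff s (hsub hs)).continuousAt.continuousWithinAt)
      fun s hs => hdev s (hsub hs)
  have hlim :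
      Tendsto (fun t => Real.exp (L * (t * (|Real.log t| + 1))) - 1) (𝓝[>] 0) (𝓝 0) := by
    have h := tendsto_mul_abs_log_add_one_nhdsGT_zero.const_mul L
    rw [mul_zero] at h
    simpa using ((Real.continuous_exp.tendsto 0).comp h).sub_const 1
  rw [tendsto_iff_norm_sub_tendsto_zero]
  exact squeeze_zero' (Eventually.of_forall fun t => norm_nonneg _)
    (eventually_of_mem (Ioo_mem_nhdsGT hb) hbound) hlim
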